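/- Let n > 4 and let λ be an integer with 0 ≤ λ ≤ n−4 and λ ≡ n (mod 2). Let F be an (n,m)-function with F(0) = 0 such that W_F(μ,ν) ∈ {0, 2^{(n+λ)/2}, −2^{(n+λ)/2}} for every μ ∈ 𝔽₂^m∖{0} and ν ∈ 𝔽₂ⁿ, with |W_F(μ,ν)| = 2^{(n+λ)/2} attained for some (μ,ν) (vectorial plateaued with single amplitude). Then C_F is a minimal linear code, the minimum Hamming weight of a nonzero codeword is 2^{n−1} − 2^{(n+λ)/2−1}, and the weight distribution over the pairs (μ,ν) ∈ 𝔽₂^m × 𝔽₂ⁿ is: |{(μ,ν) : wt(c(μ,ν)) = 2^{n−1}}| = 2ⁿ−1 + (2^m−1)(2ⁿ−2^{n−λ}); |{(μ,ν) : wt(c(μ,ν)) = 2^{n−1} + 2^{(n+λ)/2−1}}| = (2^m−1)(2^{n−λ−1} − 2^{(n−λ)/2−1}); and |{(μ,ν) : wt(c(μ,ν)) = 2^{n−1} − 2^{(n+λ)/2−1}}| = (2^m−1)(2^{n−λ−1} + 2^{(n−λ)/2−1}). -/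
import Mathlib

def dotp {n : ℕ} (v x : Fin n → ZMod 2) : ZMod 2 := ∑ i, v i * x i

def wht {n : ℕ} (f : (Fin n → ZMod 2) → ZMod 2) (ν : Fin n → ZMod 2) : ℤ :=
  ∑ x : Fin n → ZMod 2, (-1 : ℤ) ^ (f x + dotp ν x).val

def whtF {n m : ℕ} (F : (Fin n → ZMod 2) → (Fin m → ZMod 2))
    (μ : Fin m → ZMod 2) (ν : Fin n → ZMod 2) : ℤ :=
  wht (fun x => dotp μ (F x)) ν

def cw {n m : ℕ} (F : (Fin n → ZMod 2) → (Fin m → ZMod 2))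
    (μ : Fin m → ZMod 2) (ν : Fin n → ZMod 2) :
    {x : Fin n → ZMod 2 // x ≠ 0} → ZMod 2 :=
  fun x => dotp μ (F x.1) + dotp ν x.1

def codeF {n m : ℕ} (F : (Fin n → ZMod 2) → (Fin m → ZMod 2)) :
    Set ({x : Fin n → ZMod 2 // x ≠ 0} → ZMod 2) :=
  Set.range fun p : (Fin m → ZMod 2) × (Fin n → ZMod 2) => cw F p.1 p.2

def wt {n : ℕ} (c : {x : Fin n → ZMod 2 // x ≠ 0} → ZMod 2) : ℕ :=
  (Finset.univ.filter fun x => c x = 1).card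

def IsMinimal {n : ℕ} (C : Set ({x : Fin n → ZMod 2 // x ≠ 0} → ZMod 2)) : Prop :=
  ∀ c ∈ C, ∀ c' ∈ C, c ≠ 0 → c' ≠ 0 →
    {x | c' x = 1} ⊆ {x | c x = 1} → c' = c

def weights {n m : ℕ} (F : (Fin n → ZMod 2) → (Fin m → ZMod 2)) : Set ℕ :=
  {w | ∃ c ∈ codeF F, c ≠ 0 ∧ wt c = w}

/-! ### Auxiliary material -/

def chi (a : ZMod 2) : ℤ := (-1) ^ a.val

lemma chi_add (a b : ZMod 2) : chi (a + b) = chi a * chi b := by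
  revert a b; decide

lemma chi_zero : chi 0 = 1 := rfl
lemma chi_one : chi 1 = -1 := rfl

lemma dotp_comm {n : ℕ} (v x : Fin n → ZMod 2) : dotp v x = dotp x v := by
  unfold dotp; exact Finset.sum_congr rfl fun i _ => mul_comm _ _

lemma dotp_add_right {n : ℕ} (v x y : Fin n → ZMod 2) :
    dotp v (x + y) = dotp v x + dotp v y := by
  unfold dotp; rw [← Finset.sum_add_distrib]
  exact Finset.sum_congr rfl fun i _ => by simp [mul_add]

lemma dotp_add_left {n : ℕ} (v w x : Fin n → ZMod 2) :
    dotp (v + w) x = dotp v x + dotp w x := by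
  rw [dotp_comm, dotp_add_right, dotp_comm x v, dotp_comm x w]

lemma dotp_zero_left {n : ℕ} (x : Fin n → ZMod 2) : dotp 0 x = 0 := by
  unfold dotp; simp

lemma dotp_zero_right {n : ℕ} (v : Fin n → ZMod 2) : dotp v 0 = 0 := by
  unfold dotp; simp

lemma dotp_single {n : ℕ} (v : Fin n → ZMod 2) (i : Fin n) :
    dotp v (Pi.single i 1) = v i := by
  unfold dotp
  rw [Finset.sum_eq_single i]
  · simp
  · intro j _ hj; simp [Pi.single_apply, hj]
  · simp

lemma card_V (n : ℕ) : Fintype.card (Fin n → ZMod 2) = 2 ^ n := by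
  simp [Fintype.card_fun]

lemma sum_chi_dotp {n : ℕ} (ν : Fin n → ZMod 2) :
    ∑ x : Fin n → ZMod 2, chi (dotp ν x) = if ν = 0 then 2 ^ n else 0 := by
  split_ifs with h
  · subst h
    simp only [dotp_zero_left, chi_zero, Finset.sum_const, Finset.card_univ, card_V,
      smul_eq_mul, mul_one, nsmul_eq_mul]
    push_cast; ring
  · obtain ⟨i, hi⟩ : ∃ i, ν i ≠ 0 := by
      by_contra hc
      push_neg at hc
      exact h (funext fun i => hc i)
    have hi1 : ν i = 1 := by
      have : ∀ a : ZMod 2, a ≠ 0 → a = 1 := by decide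
      exact this _ hi
    refine Finset.sum_ninvolution (fun x => x + Pi.single i 1) ?_ ?_ (fun _ => Finset.mem_univ _) ?_
    · intro x
      rw [dotp_add_right, dotp_single, hi1, chi_add, chi_one]
      ring
    · intro x _ hx
      have := congrFun hx i
      simp at this
    · intro x
      have : (Pi.single i 1 : Fin n → ZMod 2) + Pi.single i 1 = 0 := by
        funext j
        simp [Pi.single_apply]
        split_ifs <;> decide
      show x + Pi.single i 1 + Pi.single i 1 = x
      rw [add_assoc, this, add_zero]

lemma wht_eq_sum_chi {n : ℕ} (f : (Fin n → ZMod 2) → ZMod 2) (ν : Fin n → ZMod 2) :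
    wht f ν = ∑ x : Fin n → ZMod 2, chi (f x + dotp ν x) := rfl

lemma sum_wht {n : ℕ} (f : (Fin n → ZMod 2) → ZMod 2) :
    ∑ ν : Fin n → ZMod 2, wht f ν = 2 ^ n * chi (f 0) := by
  simp only [wht_eq_sum_chi]
  rw [Finset.sum_comm]
  have : ∀ x : Fin n → ZMod 2, ∑ ν : Fin n → ZMod 2, chi (f x + dotp ν x)
      = chi (f x) * (if x = 0 then (2:ℤ) ^ n else 0) := by
    intro x
    rw [← sum_chi_dotp x, Finset.mul_sum]
    refine Finset.sum_congr rfl fun ν _ => ?_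
    rw [chi_add, dotp_comm]
  rw [Finset.sum_congr rfl fun x _ => this x]
  simp only [mul_ite, mul_zero]
  rw [Finset.sum_ite_eq' Finset.univ (0 : Fin n → ZMod 2) (fun x => chi (f x) * 2 ^ n)]
  simp [mul_comm]

lemma parseval {n : ℕ} (f : (Fin n → ZMod 2) → ZMod 2) :
    ∑ ν : Fin n → ZMod 2, (wht f ν) ^ 2 = 2 ^ (2 * n) := by
  have key : ∀ ν : Fin n → ZMod 2, (wht f ν) ^ 2
      = ∑ x : Fin n → ZMod 2, ∑ y : Fin n → ZMod 2,
          chi (f x) * chi (f y) * chi (dotp (x + y) ν) := by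
    intro ν
    rw [wht_eq_sum_chi, sq, Finset.sum_mul_sum]
    refine Finset.sum_congr rfl fun x _ => Finset.sum_congr rfl fun y _ => ?_
    rw [chi_add, chi_add, dotp_add_left, chi_add, dotp_comm x ν, dotp_comm y ν]
    ring
  simp only [key]
  rw [Finset.sum_comm]
  have : ∀ x : Fin n → ZMod 2, ∑ ν : Fin n → ZMod 2, ∑ y : Fin n → ZMod 2,
      chi (f x) * chi (f y) * chi (dotp (x + y) ν)
      = ∑ y : Fin n → ZMod 2, chi (f x) * chi (f y) * (if x + y = 0 then (2:ℤ)^n else 0) := by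
    intro x
    rw [Finset.sum_comm]
    refine Finset.sum_congr rfl fun y _ => ?_
    rw [← Finset.mul_sum, sum_chi_dotp]
  rw [Finset.sum_congr rfl fun x _ => this x]
  have hx0 : ∀ x y : Fin n → ZMod 2, x + y = 0 ↔ y = x := by
    intro x y
    constructor
    · intro h
      funext i
      have hi := congrFun h i
      have : ∀ a b : ZMod 2, a + b = 0 → b = a := by decide
      exact this _ _ hi
    · rintro rfl
      funext i
      have : ∀ a : ZMod 2, a + a = 0 := by decide
      exact this _
  have step : ∀ x : Fin n → ZMod 2,
      ∑ y : Fin n → ZMod 2, chi (f x) * chi (f y) * (if x + y = 0 then (2:ℤ)^n else 0)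
      = 2 ^ n := by
    intro x
    simp only [hx0, mul_ite, mul_zero]
    rw [Finset.sum_ite_eq' Finset.univ x (fun y => chi (f x) * chi (f y) * 2 ^ n)]
    have : chi (f x) * chi (f x) = 1 := by
      have : ∀ a : ZMod 2, chi a * chi a = 1 := by decide
      exact this _
    simp [this]
  rw [Finset.sum_congr rfl fun x _ => step x]
  simp [Finset.card_univ, card_V, two_mul, pow_add]

lemma wht_card {n : ℕ} (f : (Fin n → ZMod 2) → ZMod 2) (ν : Fin n → ZMod 2) :
    wht f ν = 2 ^ n
      - 2 * ((Finset.univ.filter fun x : Fin n → ZMod 2 => f x + dotp ν x = 1).card : ℤ) := by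
  rw [wht_eq_sum_chi]
  rw [← Finset.sum_filter_add_sum_filter_not Finset.univ (fun x => f x + dotp ν x = 1)]
  have h1 : ∑ x ∈ (Finset.univ.filter fun x : Fin n → ZMod 2 => f x + dotp ν x = 1),
      chi (f x + dotp ν x)
      = -((Finset.univ.filter fun x : Fin n → ZMod 2 => f x + dotp ν x = 1).card : ℤ) := by
    rw [Finset.sum_congr rfl (fun x hx => by
      rw [(Finset.mem_filter.1 hx).2, chi_one])]
    simp
  have h2 : ∑ x ∈ (Finset.univ.filter fun x : Fin n → ZMod 2 => ¬(f x + dotp ν x = 1)),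
      chi (f x + dotp ν x)
      = ((Finset.univ.filter fun x : Fin n → ZMod 2 => ¬(f x + dotp ν x = 1)).card : ℤ) := by
    rw [Finset.sum_congr rfl (fun x hx => by
      have hx' := (Finset.mem_filter.1 hx).2
      have h0 : f x + dotp ν x = 0 := by
        have : ∀ a : ZMod 2, a ≠ 1 → a = 0 := by decide
        exact this _ hx'
      rw [h0, chi_zero])]
    simp
  rw [h1, h2]
  have hcards := Finset.card_filter_add_card_filter_not
    (s := (Finset.univ : Finset (Fin n → ZMod 2))) (p := fun x => f x + dotp ν x = 1)
  rw [Finset.card_univ, card_V] at hcards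
  have hp : ((2:ℤ) ^ n) = ((2 ^ n : ℕ) : ℤ) := by push_cast; ring
  rw [hp]
  generalize hP : (2:ℕ) ^ n = P at hcards ⊢
  omega

lemma wt_cw_card {n m : ℕ} (F : (Fin n → ZMod 2) → (Fin m → ZMod 2)) (h0 : F 0 = 0)
    (μ : Fin m → ZMod 2) (ν : Fin n → ZMod 2) :
    wt (cw F μ ν)
      = (Finset.univ.filter fun x : Fin n → ZMod 2 => dotp μ (F x) + dotp ν x = 1).card := by
  unfold wt
  refine Finset.card_bij' (fun x _ => x.1) (fun x hx => ⟨x, ?_⟩) ?_ ?_ ?_ ?_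
  · intro hx0
    have hx' := (Finset.mem_filter.1 hx).2
    rw [hx0, h0, dotp_zero_right, dotp_zero_right] at hx'
    exact (by decide : ¬ ((0 : ZMod 2) + 0 = 1)) hx'
  · intro x hx
    simp only [Finset.mem_filter, Finset.mem_univ, true_and]
    exact (Finset.mem_filter.1 hx).2
  · intro x hx
    simp only [Finset.mem_filter, Finset.mem_univ, true_and]
    exact (Finset.mem_filter.1 hx).2
  · intro x _; rfl
  · intro x _; rfl

lemma whtF_wt {n m : ℕ} (F : (Fin n → ZMod 2) → (Fin m → ZMod 2)) (h0 : F 0 = 0)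
    (μ : Fin m → ZMod 2) (ν : Fin n → ZMod 2) :
    whtF F μ ν = 2 ^ n - 2 * (wt (cw F μ ν) : ℤ) := by
  rw [whtF, wht_card, wt_cw_card F h0]

lemma whtF_zero {n m : ℕ} (F : (Fin n → ZMod 2) → (Fin m → ZMod 2)) (ν : Fin n → ZMod 2) :
    whtF F 0 ν = if ν = 0 then 2 ^ n else 0 := by
  rw [whtF, wht_eq_sum_chi, ← sum_chi_dotp ν]
  exact Finset.sum_congr rfl fun x _ => by rw [dotp_zero_left, zero_add]

lemma cw_add {n m : ℕ} (F : (Fin n → ZMod 2) → (Fin m → ZMod 2))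
    (μ μ' : Fin m → ZMod 2) (ν ν' : Fin n → ZMod 2) :
    cw F μ ν + cw F μ' ν' = cw F (μ + μ') (ν + ν') := by
  funext x
  show cw F μ ν x + cw F μ' ν' x = _
  unfold cw
  rw [dotp_add_left, dotp_add_left]
  ring

lemma cw_zero {n m : ℕ} (F : (Fin n → ZMod 2) → (Fin m → ZMod 2)) :
    cw F 0 0 = 0 := by
  funext x
  show dotp 0 (F x.1) + dotp 0 x.1 = 0
  rw [dotp_zero_left, dotp_zero_left, add_zero]

lemma wt_eq_zero_iff {n : ℕ} (c : {x : Fin n → ZMod 2 // x ≠ 0} → ZMod 2) :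
    wt c = 0 ↔ c = 0 := by
  unfold wt
  rw [Finset.card_eq_zero, Finset.filter_eq_empty_iff]
  constructor
  · intro h
    funext x
    have h2 : ∀ a : ZMod 2, a = 0 ∨ a = 1 := by decide
    rcases h2 (c x) with hc | hc
    · exact hc
    · exact absurd hc (h (Finset.mem_univ x))
  · rintro rfl x _
    show (0 : ZMod 2) ≠ 1
    decide

lemma wt_add_of_subset {n : ℕ} (c c' : {x : Fin n → ZMod 2 // x ≠ 0} → ZMod 2)
    (h : ∀ x, c' x = 1 → c x = 1) : wt c = wt c' + wt (c + c') := by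
  classical
  have h2 : ∀ a : ZMod 2, a = 0 ∨ a = 1 := by decide
  have heq : (Finset.univ.filter fun x => (c + c') x = 1)
      = (Finset.univ.filter fun x => c x = 1) \ (Finset.univ.filter fun x => c' x = 1) := by
    ext x
    simp only [Finset.mem_filter, Finset.mem_univ, true_and, Finset.mem_sdiff, Pi.add_apply]
    rcases h2 (c x) with hc | hc <;> rcases h2 (c' x) with hc' | hc'
    · simp [hc, hc']
    · exact absurd (h x hc') (by rw [hc]; decide)
    · simp [hc, hc']
    · simp [hc, hc']
  have hsub : (Finset.univ.filter fun x => c' x = 1) ⊆ (Finset.univ.filter fun x => c x = 1) := by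
    intro x hx
    simp only [Finset.mem_filter, Finset.mem_univ, true_and] at hx ⊢
    exact h x hx
  have hle := Finset.card_le_card hsub
  unfold wt
  rw [heq, Finset.card_sdiff_of_subset hsub]
  omega

lemma card_filter_prod {α β : Type*} [Fintype α] [Fintype β]
    (P : α → β → Prop) [∀ a b, Decidable (P a b)] :
    (Finset.univ.filter fun p : α × β => P p.1 p.2).card
      = ∑ a : α, (Finset.univ.filter fun b => P a b).card := by
  classical
  rw [← Fintype.card_subtype]
  rw [Fintype.card_congr (Equiv.subtypeProdEquivSigmaSubtype P)]
  rw [Fintype.card_sigma]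
  exact Finset.sum_congr rfl fun a _ => Fintype.card_subtype _

lemma pow_split (a : ℕ) (ha : 1 ≤ a) : (2:ℤ) ^ a = 2 * ((2 ^ (a - 1) : ℕ) : ℤ) := by
  have h : a = (a - 1) + 1 := by omega
  calc (2:ℤ) ^ a = 2 ^ ((a - 1) + 1) := by rw [← h]
  _ = 2 * ((2 ^ (a - 1) : ℕ) : ℤ) := by push_cast; ring

theorem stmt5 (n m : ℕ) (hn : 4 < n) (lam : ℕ) (hlam : lam ≤ n - 4)
    (hpar : lam % 2 = n % 2)
    (F : (Fin n → ZMod 2) → (Fin m → ZMod 2)) (h0 : F 0 = 0)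
    (hplat : ∀ μ : Fin m → ZMod 2, μ ≠ 0 → ∀ ν : Fin n → ZMod 2,
      whtF F μ ν = 0 ∨ whtF F μ ν = 2 ^ ((n + lam) / 2) ∨ whtF F μ ν = -2 ^ ((n + lam) / 2))
    (hmax : ∃ (μ : Fin m → ZMod 2) (ν : Fin n → ZMod 2), μ ≠ 0 ∧
      |whtF F μ ν| = 2 ^ ((n + lam) / 2)) :
    IsMinimal (codeF F) ∧
    IsLeast (weights F) (2 ^ (n - 1) - 2 ^ ((n + lam) / 2 - 1)) ∧
    (Finset.univ.filter fun p : (Fin m → ZMod 2) × (Fin n → ZMod 2) =>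
        wt (cw F p.1 p.2) = 2 ^ (n - 1)).card
      = 2 ^ n - 1 + (2 ^ m - 1) * (2 ^ n - 2 ^ (n - lam)) ∧
    (Finset.univ.filter fun p : (Fin m → ZMod 2) × (Fin n → ZMod 2) =>
        wt (cw F p.1 p.2) = 2 ^ (n - 1) + 2 ^ ((n + lam) / 2 - 1)).card
      = (2 ^ m - 1) * (2 ^ (n - lam - 1) - 2 ^ ((n - lam) / 2 - 1)) ∧
    (Finset.univ.filter fun p : (Fin m → ZMod 2) × (Fin n → ZMod 2) =>
        wt (cw F p.1 p.2) = 2 ^ (n - 1) - 2 ^ ((n + lam) / 2 - 1)).card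
      = (2 ^ m - 1) * (2 ^ (n - lam - 1) + 2 ^ ((n - lam) / 2 - 1)) := by
  classical
  obtain ⟨μmax, νmax, hμmax, -⟩ := hmax
  set k := (n + lam) / 2 with hk
  have hlamn : lam + 4 ≤ n := by omega
  have hk2 : 2 * k = n + lam := by omega
  have hkn : k + 2 ≤ n := by omega
  have hk1 : 3 ≤ k := by omega
  set N1 := 2 ^ (n - 1) with hN1
  set K1 := 2 ^ (k - 1) with hK1
  have hK1pos : 0 < K1 := by rw [hK1]; positivity
  have hK1N1 : 4 * K1 ≤ N1 := by
    have h1 : (2:ℕ) ^ (k - 1 + 2) ≤ 2 ^ (n - 1) := Nat.pow_le_pow_right (by norm_num) (by omega)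
    calc 4 * K1 = 2 ^ (k - 1 + 2) := by rw [hK1]; ring
    _ ≤ N1 := by rw [hN1]; exact h1
  have h2n : (2:ℤ) ^ n = 2 * (N1 : ℤ) := by
    rw [hN1]; exact pow_split n (by omega)
  have h2kk : (2:ℤ) ^ k = 2 * (K1 : ℤ) := by
    rw [hK1]; exact pow_split k (by omega)
  have hid : ∀ (μ : Fin m → ZMod 2) (ν : Fin n → ZMod 2),
      whtF F μ ν = 2 * (N1 : ℤ) - 2 * (wt (cw F μ ν) : ℤ) := by
    intro μ ν; rw [whtF_wt F h0, h2n]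
  have htri : ∀ μ : Fin m → ZMod 2, μ ≠ 0 → ∀ ν,
      whtF F μ ν = 0 ∨ whtF F μ ν = 2 * (K1:ℤ) ∨ whtF F μ ν = -(2 * (K1:ℤ)) := by
    intro μ hμ ν
    have h := hplat μ hμ ν
    rwa [h2kk] at h
  have hwt : ∀ μ : Fin m → ZMod 2, μ ≠ 0 → ∀ ν,
      (wt (cw F μ ν) = N1 ↔ whtF F μ ν = 0) ∧
      (wt (cw F μ ν) = N1 - K1 ↔ whtF F μ ν = 2 * (K1:ℤ)) ∧
      (wt (cw F μ ν) = N1 + K1 ↔ whtF F μ ν = -(2 * (K1:ℤ))) := by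
    intro μ hμ ν
    have h1 := hid μ ν
    have h2 := htri μ hμ ν
    omega
  have hwt0 : ∀ ν : Fin n → ZMod 2, wt (cw F 0 ν) = if ν = 0 then 0 else N1 := by
    intro ν
    have h1 := hid 0 ν
    have h2 := whtF_zero F ν
    split_ifs at h2 ⊢ with h
    · rw [h2n] at h2; omega
    · omega
  -- per-μ counts
  have hcount : ∀ μ : Fin m → ZMod 2, μ ≠ 0 →
      ((Finset.univ.filter fun ν => wt (cw F μ ν) = N1).card = 2 ^ n - 2 ^ (n - lam)) ∧
      ((Finset.univ.filter fun ν => wt (cw F μ ν) = N1 - K1).card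
          = 2 ^ (n - lam - 1) + 2 ^ (n - k - 1)) ∧
      ((Finset.univ.filter fun ν => wt (cw F μ ν) = N1 + K1).card
          = 2 ^ (n - lam - 1) - 2 ^ (n - k - 1)) := by
    intro μ hμ
    have hfZ : (Finset.univ.filter fun ν => wt (cw F μ ν) = N1)
        = Finset.univ.filter fun ν => whtF F μ ν = 0 := by
      ext ν; simp only [Finset.mem_filter, Finset.mem_univ, true_and]
      exact (hwt μ hμ ν).1
    have hfS : (Finset.univ.filter fun ν => wt (cw F μ ν) = N1 - K1)
        = Finset.univ.filter fun ν => whtF F μ ν = 2 * (K1:ℤ) := by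
      ext ν; simp only [Finset.mem_filter, Finset.mem_univ, true_and]
      exact (hwt μ hμ ν).2.1
    have hfT : (Finset.univ.filter fun ν => wt (cw F μ ν) = N1 + K1)
        = Finset.univ.filter fun ν => whtF F μ ν = -(2 * (K1:ℤ)) := by
      ext ν; simp only [Finset.mem_filter, Finset.mem_univ, true_and]
      exact (hwt μ hμ ν).2.2
    set S := Finset.univ.filter fun ν => whtF F μ ν = 2 * (K1:ℤ) with hS
    set T := Finset.univ.filter fun ν => whtF F μ ν = -(2 * (K1:ℤ)) with hT
    set Z := Finset.univ.filter fun ν => whtF F μ ν = 0 with hZ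
    set P : (Fin n → ZMod 2) → Prop :=
      fun ν => whtF F μ ν = 2 * (K1:ℤ) ∨ whtF F μ ν = -(2 * (K1:ℤ)) with hP
    have hunion : Finset.univ.filter P = S ∪ T := by
      ext ν
      simp only [hP, hS, hT, Finset.mem_union, Finset.mem_filter, Finset.mem_univ, true_and]
    have hdisj : Disjoint S T := by
      rw [Finset.disjoint_left]
      intro ν h1 h2
      rw [hS, Finset.mem_filter] at h1
      rw [hT, Finset.mem_filter] at h2
      omega
    have hnegP : Finset.univ.filter (fun ν => ¬ P ν) = Z := by
      ext ν
      simp only [hP, hZ, Finset.mem_filter, Finset.mem_univ, true_and]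
      have := htri μ hμ ν
      constructor
      · intro h; omega
      · intro h; omega
    have hpartition : (S.card + T.card) + Z.card = 2 ^ n := by
      have h := Finset.card_filter_add_card_filter_not
        (s := (Finset.univ : Finset (Fin n → ZMod 2))) (p := P)
      rw [hunion, hnegP, Finset.card_union_of_disjoint hdisj, Finset.card_univ, card_V] at h
      exact h
    -- Parseval
    have hpars : ∑ ν : Fin n → ZMod 2, (whtF F μ ν) ^ 2 = 2 ^ (2 * n) :=
      parseval (fun x => dotp μ (F x))
    have hsplitP : ∑ ν : Fin n → ZMod 2, (whtF F μ ν) ^ 2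
        = ((S.card : ℤ) + T.card) * (2 * (K1:ℤ)) ^ 2 := by
      rw [← Finset.sum_filter_add_sum_filter_not Finset.univ P]
      have e1 : ∑ ν ∈ Finset.univ.filter P, (whtF F μ ν) ^ 2
          = ((S.card : ℤ) + T.card) * (2 * (K1:ℤ)) ^ 2 := by
        rw [hunion, Finset.sum_union hdisj]
        have eS : ∑ ν ∈ S, (whtF F μ ν) ^ 2 = (S.card : ℤ) * (2 * (K1:ℤ)) ^ 2 := by
          have hconst : ∀ ν ∈ S, (whtF F μ ν) ^ 2 = (2 * (K1:ℤ)) ^ 2 := by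
            intro ν hν
            rw [hS, Finset.mem_filter] at hν
            rw [hν.2]
          rw [Finset.sum_congr rfl hconst, Finset.sum_const, nsmul_eq_mul]
        have eT : ∑ ν ∈ T, (whtF F μ ν) ^ 2 = (T.card : ℤ) * (2 * (K1:ℤ)) ^ 2 := by
          have hconst : ∀ ν ∈ T, (whtF F μ ν) ^ 2 = ((2:ℤ) * (K1:ℤ)) ^ 2 := by
            intro ν hν
            rw [hT, Finset.mem_filter] at hν
            rw [hν.2]
            ring
          rw [Finset.sum_congr rfl hconst, Finset.sum_const, nsmul_eq_mul]
        rw [eS, eT]; ring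
      have e2 : ∑ ν ∈ Finset.univ.filter (fun ν => ¬ P ν), (whtF F μ ν) ^ 2 = 0 := by
        rw [hnegP]
        refine Finset.sum_eq_zero fun ν hν => ?_
        rw [hZ, Finset.mem_filter] at hν
        rw [hν.2]; ring
      rw [e1, e2, add_zero]
    have habZ : (S.card : ℤ) + T.card = 2 ^ (n - lam) := by
      have hpow : ((2:ℤ) * (K1:ℤ)) ^ 2 = 2 ^ (n + lam) := by
        rw [← h2kk, ← pow_mul]
        congr 1
        omega
      have h2n2 : (2:ℤ) ^ (2 * n) = 2 ^ (n - lam) * 2 ^ (n + lam) := by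
        rw [← pow_add]
        congr 1
        omega
      have := hsplitP.symm.trans hpars
      rw [hpow, h2n2] at this
      exact mul_right_cancel₀ (pow_ne_zero _ (by norm_num)) this
    -- sum of Walsh values
    have hsum : ∑ ν : Fin n → ZMod 2, whtF F μ ν = 2 ^ n := by
      have h := sum_wht (fun x => dotp μ (F x))
      rw [h0, dotp_zero_right, chi_zero, mul_one] at h
      exact h
    have hsplitS : ∑ ν : Fin n → ZMod 2, whtF F μ ν
        = ((S.card : ℤ) - T.card) * (2 * (K1:ℤ)) := by
      rw [← Finset.sum_filter_add_sum_filter_not Finset.univ P]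
      have e1 : ∑ ν ∈ Finset.univ.filter P, whtF F μ ν
          = ((S.card : ℤ) - T.card) * (2 * (K1:ℤ)) := by
        rw [hunion, Finset.sum_union hdisj]
        have eS : ∑ ν ∈ S, whtF F μ ν = (S.card : ℤ) * (2 * (K1:ℤ)) := by
          have hconst : ∀ ν ∈ S, whtF F μ ν = 2 * (K1:ℤ) := by
            intro ν hν
            rw [hS, Finset.mem_filter] at hν
            rw [hν.2]
          rw [Finset.sum_congr rfl hconst, Finset.sum_const, nsmul_eq_mul]
        have eT : ∑ ν ∈ T, whtF F μ ν = -((T.card : ℤ) * (2 * (K1:ℤ))) := by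
          have hconst : ∀ ν ∈ T, whtF F μ ν = -(2 * (K1:ℤ)) := by
            intro ν hν
            rw [hT, Finset.mem_filter] at hν
            rw [hν.2]
          rw [Finset.sum_congr rfl hconst, Finset.sum_const, nsmul_eq_mul]
          ring
        rw [eS, eT]; ring
      have e2 : ∑ ν ∈ Finset.univ.filter (fun ν => ¬ P ν), whtF F μ ν = 0 := by
        rw [hnegP]
        refine Finset.sum_eq_zero fun ν hν => ?_
        rw [hZ, Finset.mem_filter] at hν
        rw [hν.2]
      rw [e1, e2, add_zero]
    have hambZ : (S.card : ℤ) - T.card = 2 ^ (n - k) := by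
      have h2nn : (2:ℤ) ^ n = 2 ^ (n - k) * (2 * (K1:ℤ)) := by
        rw [← h2kk, ← pow_add]
        congr 1
        omega
      have := hsplitS.symm.trans hsum
      rw [h2nn] at this
      exact mul_right_cancel₀ (by positivity) this
    -- convert to ℕ
    have hpnat : (2:ℕ) ^ (n - lam) = 2 * 2 ^ (n - lam - 1) := by
      rw [← pow_succ']
      congr 1
      omega
    have hqnat : (2:ℕ) ^ (n - k) = 2 * 2 ^ (n - k - 1) := by
      rw [← pow_succ']
      congr 1
      omega
    have habN : S.card + T.card = 2 * 2 ^ (n - lam - 1) := by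
      have h1 : ((S.card + T.card : ℕ) : ℤ) = ((2 * 2 ^ (n - lam - 1) : ℕ) : ℤ) := by
        push_cast
        rw [habZ, pow_split (n - lam) (by omega)]
        push_cast
        ring
      exact_mod_cast h1
    have hambN : (S.card : ℤ) - T.card = 2 * ((2 ^ (n - k - 1) : ℕ) : ℤ) :=
      hambZ.trans (pow_split (n - k) (by omega))
    rw [hfZ, hfS, hfT]
    rw [hpnat]
    omega
  -- μ = 0 counts
  have hwt0filter : (Finset.univ.filter fun ν => wt (cw F 0 ν) = N1).card = 2 ^ n - 1 := by
    have : (Finset.univ.filter fun ν => wt (cw F 0 ν) = N1)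
        = Finset.univ.filter fun ν : Fin n → ZMod 2 => ν ≠ 0 := by
      ext ν
      simp only [Finset.mem_filter, Finset.mem_univ, true_and, hwt0 ν]
      split_ifs with h
      · simp [h]; omega
      · simp [h]
    rw [this, Finset.filter_ne', Finset.card_erase_of_mem (Finset.mem_univ _),
      Finset.card_univ, card_V]
  have hwt0min : (Finset.univ.filter fun ν => wt (cw F 0 ν) = N1 - K1).card = 0 := by
    rw [Finset.card_eq_zero, Finset.filter_eq_empty_iff]
    intro ν _
    rw [hwt0 ν]
    split_ifs <;> omega
  have hwt0max : (Finset.univ.filter fun ν => wt (cw F 0 ν) = N1 + K1).card = 0 := by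
    rw [Finset.card_eq_zero, Finset.filter_eq_empty_iff]
    intro ν _
    rw [hwt0 ν]
    split_ifs <;> omega
  -- assembly of product counts
  have hassemble : ∀ (w : ℕ) (c0 cμ : ℕ),
      (Finset.univ.filter fun ν => wt (cw F 0 ν) = w).card = c0 →
      (∀ μ : Fin m → ZMod 2, μ ≠ 0 →
        (Finset.univ.filter fun ν => wt (cw F μ ν) = w).card = cμ) →
      (Finset.univ.filter fun p : (Fin m → ZMod 2) × (Fin n → ZMod 2) =>
        wt (cw F p.1 p.2) = w).card = c0 + (2 ^ m - 1) * cμ := by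
    intro w c0 cμ h0' hμ'
    rw [card_filter_prod (fun μ ν => wt (cw F μ ν) = w)]
    rw [← Finset.add_sum_erase Finset.univ _ (Finset.mem_univ (0 : Fin m → ZMod 2))]
    rw [h0']
    congr 1
    rw [Finset.sum_congr rfl (fun μ hμ => hμ' μ (Finset.ne_of_mem_erase hμ))]
    rw [Finset.sum_const, Finset.card_erase_of_mem (Finset.mem_univ _), Finset.card_univ,
      card_V, smul_eq_mul]
  -- bounds
  have hub : ∀ (μ : Fin m → ZMod 2) (ν : Fin n → ZMod 2), wt (cw F μ ν) ≤ N1 + K1 := by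
    intro μ ν
    by_cases hμ : μ = 0
    · subst hμ; rw [hwt0 ν]; split_ifs <;> omega
    · have h1 := hwt μ hμ ν
      rcases htri μ hμ ν with h | h | h
      · rw [h1.1.2 h]; omega
      · rw [h1.2.1.2 h]; omega
      · rw [h1.2.2.2 h]
  have hlb : ∀ (μ : Fin m → ZMod 2) (ν : Fin n → ZMod 2),
      cw F μ ν ≠ 0 → N1 - K1 ≤ wt (cw F μ ν) := by
    intro μ ν hne
    by_cases hμ : μ = 0
    · subst hμ
      rw [hwt0 ν]
      split_ifs with h
      · exact absurd (by rw [h]; exact cw_zero F) hne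
      · omega
    · have h1 := hwt μ hμ ν
      rcases htri μ hμ ν with h | h | h
      · rw [h1.1.2 h]; omega
      · rw [h1.2.1.2 h]
      · rw [h1.2.2.2 h]; omega
  refine ⟨?_, ⟨?_, ?_⟩, ?_, ?_, ?_⟩
  · -- minimality
    rintro c ⟨p, rfl⟩ c' ⟨p', rfl⟩ hc0 hc'0 hsub
    by_contra hne
    have hsum_ne : cw F p.1 p.2 + cw F p'.1 p'.2 ≠ 0 := by
      intro h
      apply hne
      funext x
      have hx := congrFun h x
      have : ∀ a b : ZMod 2, a + b = 0 → b = a := by decide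
      exact this _ _ hx
    have hadd := cw_add F p.1 p'.1 p.2 p'.2
    have hwadd := wt_add_of_subset (cw F p.1 p.2) (cw F p'.1 p'.2) (fun x hx => hsub hx)
    have hb1 := hlb p'.1 p'.2 hc'0
    have hb2 : N1 - K1 ≤ wt (cw F p.1 p.2 + cw F p'.1 p'.2) := by
      rw [hadd]
      exact hlb _ _ (by rw [← hadd]; exact hsum_ne)
    have hb3 := hub p.1 p.2
    omega
  · -- min weight attained
    obtain ⟨hcZ, hcS, hcT⟩ := hcount μmax hμmax
    have hpos : 0 < (Finset.univ.filter fun ν => wt (cw F μmax ν) = N1 - K1).card := by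
      rw [hcS]; positivity
    obtain ⟨ν, hν⟩ := Finset.card_pos.1 hpos
    rw [Finset.mem_filter] at hν
    refine ⟨cw F μmax ν, ⟨(μmax, ν), rfl⟩, ?_, hν.2⟩
    intro h
    have := (wt_eq_zero_iff _).2 h
    omega
  · -- lower bound
    rintro w ⟨c, ⟨p, rfl⟩, hc0, rfl⟩
    exact hlb p.1 p.2 hc0
  · -- weight 2^(n-1)
    exact hassemble N1 (2 ^ n - 1) (2 ^ n - 2 ^ (n - lam)) hwt0filter
      (fun μ hμ => (hcount μ hμ).1)
  · -- weight N1 + K1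
    have e : (n - lam) / 2 - 1 = n - k - 1 := by omega
    rw [e]
    have h := hassemble (N1 + K1) 0 (2 ^ (n - lam - 1) - 2 ^ (n - k - 1)) hwt0max
      (fun μ hμ => (hcount μ hμ).2.2)
    rwa [zero_add] at h
  · -- weight N1 - K1
    have e : (n - lam) / 2 - 1 = n - k - 1 := by omega
    rw [e]
    have h := hassemble (N1 - K1) 0 (2 ^ (n - lam - 1) + 2 ^ (n - k - 1)) hwt0min
      (fun μ hμ => (hcount μ hμ).2.1)
    rwa [zero_add] at h
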